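/- Let K be a proper cone, c a unit vector in the interior of K ∩ K^*, and ‖·‖_K the cone-norm ‖x‖_K = inf{t>0 : x ∈ E_t K} where E_t = c c^T + t(I − c c^T). Then for all x, y with (x,c) > 0 and (y,c) > 0: ‖x + y‖_K ≤ ‖x‖_K + ‖y‖_K. -/

import Mathlib

open Matrix Set

def IsProperCone {d : ℕ} (K : Set (Fin d → ℝ)) : Prop :=
  IsClosed K ∧ Convex ℝ K ∧ (∀ x ∈ K, ∀ t : ℝ, 0 ≤ t → t • x ∈ K) ∧
    K ∩ (-K) = {0} ∧ (interior K).Nonempty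

def dualConeSet {d : ℕ} (K : Set (Fin d → ℝ)) : Set (Fin d → ℝ) :=
  {x | ∀ y ∈ K, 0 ≤ x ⬝ᵥ y}

noncomputable def Emat {d : ℕ} (c : Fin d → ℝ) (t : ℝ) : Matrix (Fin d) (Fin d) ℝ :=
  vecMulVec c c + t • (1 - vecMulVec c c)

/-- The cone-norm `‖x‖_K = inf {t > 0 : x ∈ E_t K}`. -/
noncomputable def coneNorm {d : ℕ} (K : Set (Fin d → ℝ)) (c : Fin d → ℝ)
    (x : Fin d → ℝ) : ℝ :=
  sInf {t : ℝ | 0 < t ∧ x ∈ (Emat c t).mulVec '' K}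

/-! `E_t` fixes `c` and scales `c^⊥` by `t`, so `E_t a + E_s b = E_{t+s} z` where `z` is a conic
combination of `a`, `b` and `c`; the coefficient of `c` is nonnegative because `c ∈ K^*`. Hence
the sets `S_x = {t > 0 : x ∈ E_t K}` satisfy `S_x + S_y ⊆ S_{x+y}`. Since `c ∈ int K` and
`(x, c) > 0`, the set `S_x` is nonempty, and `inf (S_x + S_y) = inf S_x + inf S_y`. -/

open scoped Pointwise

lemma IsProperCone.add_mem {d : ℕ} {K : Set (Fin d → ℝ)} (hK : IsProperCone K)
    {u v : Fin d → ℝ} (hu : u ∈ K) (hv : v ∈ K) : u + v ∈ K := by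
  have hmid := hK.2.1 hu hv (by norm_num : (0 : ℝ) ≤ 1 / 2) (by norm_num : (0 : ℝ) ≤ 1 / 2)
    (by norm_num)
  convert hK.2.2.1 _ hmid 2 zero_le_two using 1
  module

def IsProperCone.toPointedCone {d : ℕ} {K : Set (Fin d → ℝ)} (hK : IsProperCone K) :
    PointedCone ℝ (Fin d → ℝ) :=
  .ofConeComb K (hK.2.2.2.2.mono interior_subset) fun _ hu _ hv a ha b hb =>
    hK.add_mem (hK.2.2.1 _ hu a ha) (hK.2.2.1 _ hv b hb)

section Emat

variable {d : ℕ} {c : Fin d → ℝ}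
open Filter Topology

lemma Emat_mulVec (c : Fin d → ℝ) (t : ℝ) (v : Fin d → ℝ) :
    Emat c t *ᵥ v = (c ⬝ᵥ v) • c + t • (v - (c ⬝ᵥ v) • c) := by
  simp only [Emat, add_mulVec, smul_mulVec, sub_mulVec, one_mulVec, vecMulVec_mulVec,
    op_smul_eq_smul]

lemma Emat_mulVec_smul_add (hc : c ⬝ᵥ c = 1) {w : Fin d → ℝ} (hw : c ⬝ᵥ w = 0) (t a : ℝ) :
    Emat c t *ᵥ (a • c + w) = a • c + t • w := by
  simp only [Emat_mulVec, dotProduct_add, dotProduct_smul, hc, hw, smul_eq_mul]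
  module

lemma exists_pos_mem_Emat_image (C : PointedCone ℝ (Fin d → ℝ)) (hc : c ⬝ᵥ c = 1)
    (hcC : c ∈ interior (C : Set (Fin d → ℝ))) {x : Fin d → ℝ} (hx : 0 < c ⬝ᵥ x) :
    ∃ t, 0 < t ∧ x ∈ (Emat c t).mulVec '' C := by
  set w := x - (c ⬝ᵥ x) • c
  have hw : c ⬝ᵥ w = 0 := by simp [w, dotProduct_sub, dotProduct_smul, hc]
  obtain ⟨δ, hδ, hδC⟩ : ∃ δ : ℝ, 0 < δ ∧ c + δ • w ∈ C := by
    have hlim : Tendsto (fun δ : ℝ => c + δ • w) (𝓝 0) (𝓝 c) := by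
      simpa using (by fun_prop : Continuous fun δ : ℝ => c + δ • w).tendsto 0
    exact (hlim.eventually (mem_interior_iff_mem_nhds.mp hcC)).exists_gt
  refine ⟨(δ * (c ⬝ᵥ x))⁻¹, by positivity, (c ⬝ᵥ x) • (c + δ • w), C.smul_mem hx.le hδC, ?_⟩
  rw [smul_add, smul_smul, Emat_mulVec_smul_add hc (by simp [dotProduct_smul, hw]), smul_smul,
    mul_comm δ, inv_mul_cancel₀ (by positivity), one_smul]
  simp [w]

lemma Emat_image_add_subset (C : PointedCone ℝ (Fin d → ℝ)) (hc : c ⬝ᵥ c = 1) (hcC : c ∈ C)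
    (hcC' : c ∈ dualConeSet C) {t s : ℝ} (ht : 0 < t) (hs : 0 < s) :
    (Emat c t).mulVec '' C + (Emat c s).mulVec '' C ⊆ (Emat c (t + s)).mulVec '' C := by
  rintro _ ⟨_, ⟨a, ha, rfl⟩, _, ⟨b, hb, rfl⟩, rfl⟩
  have hca := hcC' a ha
  have hcb := hcC' b hb
  -- The component of `z` along `c` is that of `a + b`; its component in `c^⊥` is the
  -- `(t, s)`-weighted mean of those of `a` and `b`.
  set z := (t + s)⁻¹ • (t • a + s • b + (s * (c ⬝ᵥ a) + t * (c ⬝ᵥ b)) • c)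
  have hcz : c ⬝ᵥ z = c ⬝ᵥ a + c ⬝ᵥ b := by
    simp only [z, dotProduct_add, dotProduct_smul, hc, smul_eq_mul]
    field_simp
    ring
  refine ⟨z, C.smul_mem (by positivity) (add_mem (add_mem (C.smul_mem ht.le ha)
    (C.smul_mem hs.le hb)) (C.smul_mem (by positivity) hcC)), ?_⟩
  rw [Emat_mulVec, Emat_mulVec, Emat_mulVec, hcz]
  simp only [z]
  match_scalars <;> field_simp
  ring

end Emat

/-- Triangle inequality for the cone-norm. -/
theorem coneNorm_triangle {d : ℕ} (K : Set (Fin d → ℝ))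
    (hK : IsProperCone K) (c : Fin d → ℝ) (hc : c ⬝ᵥ c = 1)
    (hcint : c ∈ interior (K ∩ dualConeSet K))
    (x y : Fin d → ℝ) (hx : 0 < x ⬝ᵥ c) (hy : 0 < y ⬝ᵥ c) :
    coneNorm K c (x + y) ≤ coneNorm K c x + coneNorm K c y := by
  let S : (Fin d → ℝ) → Set ℝ := fun z => {t | 0 < t ∧ z ∈ (Emat c t).mulVec '' K}
  have hS_bdd (z : Fin d → ℝ) : BddBelow (S z) := ⟨0, fun _ ht => ht.1.le⟩
  have hS_ne {z : Fin d → ℝ} (hz : 0 < z ⬝ᵥ c) : (S z).Nonempty :=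
    exists_pos_mem_Emat_image hK.toPointedCone hc (interior_mono inter_subset_left hcint)
      (by rwa [dotProduct_comm])
  have hS_add : S x + S y ⊆ S (x + y) := by
    rintro _ ⟨t, ⟨ht, hxt⟩, s, ⟨hs, hys⟩, rfl⟩
    obtain ⟨hcK, hcK'⟩ := interior_subset hcint
    exact ⟨add_pos ht hs,
      Emat_image_add_subset hK.toPointedCone hc hcK hcK' ht hs (add_mem_add hxt hys)⟩
  calc coneNorm K c (x + y) ≤ sInf (S x + S y) :=
        csInf_le_csInf (hS_bdd _) ((hS_ne hx).add (hS_ne hy)) hS_add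
    _ = coneNorm K c x + coneNorm K c y := csInf_add (hS_ne hx) (hS_bdd x) (hS_ne hy) (hS_bdd y)
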